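/- arXiv:2403.10919 — 3 statements merged into one kernel-verified Lean document; each statement's English description precedes it below -/
import Mathlib

section
/- Every relation represented by a task hypergraph is total: if (V,E) is a finite directed acyclic hypergraph in which every hyperedge e represents a total relation between the domains of its input vertices In(e) and output vertices Out(e), each vertex has at most one incoming hyperedge, R is the set of initial vertices (those not in the output of any edge), and W ⊆ V \ R, then the induced relation React ⊆ Dom(R) × Dom(W) (obtained by existentially quantifying the intermediate variables and conjoining all edge relations) is total: for every valuation u_r ∈ Dom(R) there exists u_w ∈ Dom(W) with React(u_r, u_w). -/
/-! Since the hypergraph is finite and acyclic, the step relation is well founded, so a global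
valuation can be built by recursion: initial vertices take the given values, and every other
vertex takes the value that a fixed witness of totality of its (unique) incoming task assigns it.
Uniqueness of the incoming task makes the outputs of each task coincide with that witness, so
every task relation holds. -/

/-- A directed hypergraph over vertex type `V` with hyperedge type `E`:
each hyperedge has a source set `In e` and a target set `Out e`. -/
structure DirHypergraph (V : Type) where
  E : Type
  In : E → Set V
  Out : E → Set V

/-- One step along a hyperedge: `u` is in the source and `v` in the target of some edge. -/
def DirHypergraph.Step {V : Type} (g : DirHypergraph V) (u v : V) : Prop :=
  ∃ e : g.E, u ∈ g.In e ∧ v ∈ g.Out e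

/-- Acyclicity: no nontrivial path from a vertex to itself. -/
def DirHypergraph.Acyclic {V : Type} (g : DirHypergraph V) : Prop :=
  ∀ v : V, ¬ Relation.TransGen g.Step v v

/-- An initial vertex: one lying in the target of no hyperedge. -/
def DirHypergraph.Initial {V : Type} (g : DirHypergraph V) (v : V) : Prop :=
  ∀ e : g.E, v ∉ g.Out e

namespace DirHypergraph

theorem Acyclic.wellFounded_step {V : Type} [Finite V] {g : DirHypergraph V} (h : g.Acyclic) :
    WellFounded g.Step :=
  haveI : Std.Irrefl (Relation.TransGen g.Step) := ⟨h⟩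
  Subrelation.wf Relation.TransGen.single (Finite.wellFounded_of_trans_of_irrefl _)

variable {V : Type} (g : DirHypergraph V) {Dom : V → Type} (hwf : WellFounded g.Step)
  (out : ∀ e : g.E, (∀ v ∈ g.In e, Dom v) → ∀ v ∈ g.Out e, Dom v)
  (ur : ∀ v, g.Initial v → Dom v)

noncomputable def evaluate : ∀ v, Dom v :=
  open Classical in
  hwf.fix fun v ih =>
    if h : ∃ e, v ∈ g.Out e then
      out h.choose (fun u hu => ih u ⟨h.choose, hu, h.choose_spec⟩) v h.choose_spec
    else ur v fun e he => h ⟨e, he⟩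

theorem evaluate_of_initial (v : V) (hv : g.Initial v) : g.evaluate hwf out ur v = ur v hv := by
  have h : ¬ ∃ e, v ∈ g.Out e := fun ⟨e, he⟩ => hv e he
  rw [evaluate, hwf.fix_eq, dif_neg h]

theorem evaluate_of_mem_out (hone : ∀ (v : V) (e e' : g.E), v ∈ g.Out e → v ∈ g.Out e' → e = e')
    (e : g.E) (v : V) (hv : v ∈ g.Out e) :
    g.evaluate hwf out ur v = out e (fun u _ => g.evaluate hwf out ur u) v hv := by
  have h : ∃ e, v ∈ g.Out e := ⟨e, hv⟩
  obtain rfl : h.choose = e := hone v _ e h.choose_spec hv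
  rw [evaluate, hwf.fix_eq, dif_pos h]

theorem evaluate_satisfies (rel : ∀ e : g.E, (∀ v ∈ g.In e, Dom v) → (∀ v ∈ g.Out e, Dom v) → Prop)
    (hone : ∀ (v : V) (e e' : g.E), v ∈ g.Out e → v ∈ g.Out e' → e = e')
    (hout : ∀ e r, rel e r (out e r)) (e : g.E) :
    rel e (fun v _ => g.evaluate hwf out ur v) (fun v _ => g.evaluate hwf out ur v) := by
  have hval : (fun v _ => g.evaluate hwf out ur v) = out e (fun u _ => g.evaluate hwf out ur u) :=
    funext fun v => funext (g.evaluate_of_mem_out hwf out ur hone e v)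
  rw [hval]
  exact hout e _

end DirHypergraph

theorem taskGraph_relation_total_general {V : Type} [Finite V] (Dom : V → Type)
    (g : DirHypergraph V)
    (rel : ∀ e : g.E, (∀ v ∈ g.In e, Dom v) → (∀ v ∈ g.Out e, Dom v) → Prop)
    (htotal : ∀ (e : g.E) (r : ∀ v ∈ g.In e, Dom v), ∃ w, rel e r w)
    (hacyclic : g.Acyclic)
    (hone : ∀ (v : V) (e e' : g.E), v ∈ g.Out e → v ∈ g.Out e' → e = e')
    (R W : Set V)
    (hR : R = {v | g.Initial v}) :
    ∀ ur : ∀ v ∈ R, Dom v, ∃ uw : ∀ v ∈ W, Dom v,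
      ∃ a : ∀ v : V, Dom v,
        (∀ v (hv : v ∈ R), a v = ur v hv) ∧
        (∀ v (hv : v ∈ W), a v = uw v hv) ∧
        (∀ e : g.E, rel e (fun v _ => a v) (fun v _ => a v)) := by
  intro ur
  subst hR
  choose out hout using htotal
  have hwf := hacyclic.wellFounded_step
  refine ⟨fun v _ => g.evaluate hwf out ur v, g.evaluate hwf out ur,
    g.evaluate_of_initial hwf out ur, fun _ _ => rfl, ?_⟩
  exact g.evaluate_satisfies hwf out ur rel hone hout

/-- Every relation represented by a task hypergraph is total.  The task graph
`g` carries, for each hyperedge `e`, a total relation `rel e` between the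
domains of its source and target vertices; each vertex has at most one incoming
hyperedge; `R` is the set of initial vertices and `W ⊆ V \ R`.  The induced
relation `React` (existentially quantifying a global valuation restricting to
the given valuations of `R` and `W` and satisfying all task relations) is
total: every valuation of `R` extends to a valuation of `W` in the relation. -/
theorem taskGraph_relation_total {V : Type} [Finite V] (Dom : V → Type)
    [hne : ∀ v, Nonempty (Dom v)]
    (g : DirHypergraph V) [Finite g.E]
    (rel : ∀ e : g.E, (∀ v ∈ g.In e, Dom v) → (∀ v ∈ g.Out e, Dom v) → Prop)
    (htotal : ∀ (e : g.E) (r : ∀ v ∈ g.In e, Dom v), ∃ w, rel e r w)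
    (hacyclic : g.Acyclic)
    (hone : ∀ (v : V) (e e' : g.E), v ∈ g.Out e → v ∈ g.Out e' → e = e')
    (R W : Set V)
    (hR : R = {v | g.Initial v})
    (hW : W ⊆ Rᶜ) :
    ∀ ur : ∀ v ∈ R, Dom v, ∃ uw : ∀ v ∈ W, Dom v,
      ∃ a : ∀ v : V, Dom v,
        (∀ v (hv : v ∈ R), a v = ur v hv) ∧
        (∀ v (hv : v ∈ W), a v = uw v hv) ∧
        (∀ e : g.E, rel e (fun v _ => a v) (fun v _ => a v)) :=
  taskGraph_relation_total_general Dom g rel htotal hacyclic hone R W hR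
end

section
/- Projection rule for parallel composition: if M₁ and M₂ are compatible modules, then M₁ ∥ M₂ implements M₁. -/
open Classical

/-- A reactive module over variables `Var` with domains `Dom`. -/
structure RModule (Var : Type) (Dom : Var → Type) where
  I : Set Var
  O : Set Var
  S : Set Var
  Init : (∀ v ∈ S, Dom v) → Prop
  React : (∀ v ∈ S, Dom v) → (∀ v ∈ I, Dom v) → (∀ v ∈ O, Dom v) → (∀ v ∈ S, Dom v) → Prop

variable {Var : Type} {Dom : Var → Type}

/-- `t` is a trace of `M`: a sequence of input/output valuations arising from an
execution starting in an initial state. -/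
def RModule.Trace (M : RModule Var Dom) (t : ℕ → ∀ v ∈ M.I ∪ M.O, Dom v) : Prop :=
  ∃ s : ℕ → ∀ v ∈ M.S, Dom v,
    M.Init (s 0) ∧
    ∀ j, M.React (s j) (fun v hv => t j v (Set.mem_union_left _ hv))
      (fun v hv => t j v (Set.mem_union_right _ hv)) (s (j+1))

/-- `M` implements `N`: interface inclusions and trace containment under projection. -/
def Implements (M N : RModule Var Dom) : Prop :=
  N.O ⊆ M.O ∧ N.I ⊆ M.I ∪ M.O ∧
  ∀ t, M.Trace t →
    ∃ t', N.Trace t' ∧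
      ∀ j v (hv : v ∈ N.I ∪ N.O) (hv' : v ∈ M.I ∪ M.O), t' j v hv = t j v hv'

/-- Parallel composition of two modules: merged variables, conjunction of reactions. -/
noncomputable def PC (M₁ M₂ : RModule Var Dom) : RModule Var Dom where
  I := (M₁.I ∪ M₂.I) \ (M₁.O ∪ M₂.O)
  O := M₁.O ∪ M₂.O
  S := M₁.S ∪ M₂.S
  Init := fun s => M₁.Init (fun v hv => s v (Set.mem_union_left _ hv)) ∧
                   M₂.Init (fun v hv => s v (Set.mem_union_right _ hv))
  React := fun s i o s' =>
    (M₁.React (fun v hv => s v (Set.mem_union_left _ hv))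
      (fun v hv => if h : v ∈ M₁.O ∪ M₂.O then o v h
                   else i v ⟨Set.mem_union_left _ hv, h⟩)
      (fun v hv => o v (Set.mem_union_left _ hv))
      (fun v hv => s' v (Set.mem_union_left _ hv))) ∧
    (M₂.React (fun v hv => s v (Set.mem_union_right _ hv))
      (fun v hv => if h : v ∈ M₁.O ∪ M₂.O then o v h
                   else i v ⟨Set.mem_union_right _ hv, h⟩)
      (fun v hv => o v (Set.mem_union_right _ hv))
      (fun v hv => s' v (Set.mem_union_right _ hv)))

/-- Compatibility: disjoint outputs and disjoint states. -/
def Compatible (M₁ M₂ : RModule Var Dom) : Prop :=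
  M₁.O ∩ M₂.O = ∅ ∧ M₁.S ∩ M₂.S = ∅

/-- Hiding a set `O'` of output variables. -/
def Hide (M : RModule Var Dom) (O' : Set Var) : RModule Var Dom where
  I := M.I
  O := M.O \ O'
  S := M.S
  Init := M.Init
  React := fun s i o s' =>
    ∃ oe : ∀ v ∈ M.O, Dom v,
      (∀ v (hv : v ∈ M.O \ O'), oe v hv.1 = o v hv) ∧ M.React s i oe s'

/-- Parallel composition of a family of modules. -/
noncomputable def PCfam {ι : Type} (Ms : ι → RModule Var Dom) : RModule Var Dom where
  I := (⋃ j, (Ms j).I) \ ⋃ j, (Ms j).O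
  O := ⋃ j, (Ms j).O
  S := ⋃ j, (Ms j).S
  Init := fun s => ∀ j, (Ms j).Init (fun v hv => s v (Set.mem_iUnion.2 ⟨j, hv⟩))
  React := fun s i o s' => ∀ j,
    (Ms j).React (fun v hv => s v (Set.mem_iUnion.2 ⟨j, hv⟩))
      (fun v hv => if h : v ∈ ⋃ k, (Ms k).O then o v h
                   else i v ⟨Set.mem_iUnion.2 ⟨j, hv⟩, h⟩)
      (fun v hv => o v (Set.mem_iUnion.2 ⟨j, hv⟩))
      (fun v hv => s' v (Set.mem_iUnion.2 ⟨j, hv⟩))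

/-- The empty module `M_⊤`. -/
def Mtop : RModule Var Dom where
  I := ∅
  O := ∅
  S := ∅
  Init := fun _ => True
  React := fun _ _ _ _ => True

theorem Implements.of_trace_restrict {M N : RModule Var Dom} (hO : N.O ⊆ M.O)
    (hIO : N.I ∪ N.O ⊆ M.I ∪ M.O)
    (htrace : ∀ t, M.Trace t → N.Trace fun j v hv => t j v (hIO hv)) :
    Implements M N :=
  ⟨hO, fun _ hv => hIO (Set.mem_union_left _ hv), fun t ht => ⟨_, htrace t ht, fun _ _ _ _ => rfl⟩⟩

namespace PC

variable (M₁ M₂ : RModule Var Dom)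

theorem ioVars_left_subset : M₁.I ∪ M₁.O ⊆ (PC M₁ M₂).I ∪ (PC M₁ M₂).O := by
  intro v hv
  by_cases ho : v ∈ M₁.O ∪ M₂.O
  · exact Set.mem_union_right _ ho
  · rcases hv with hv | hv
    · exact Set.mem_union_left _ ⟨Set.mem_union_left _ hv, ho⟩
    · exact absurd (Set.mem_union_left _ hv) ho

theorem trace_restrict_left {t : ℕ → ∀ v ∈ (PC M₁ M₂).I ∪ (PC M₁ M₂).O, Dom v}
    (ht : (PC M₁ M₂).Trace t) :
    M₁.Trace fun j v hv => t j v (ioVars_left_subset M₁ M₂ hv) := by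
  obtain ⟨s, hinit, hreact⟩ := ht
  refine ⟨fun j v hv => s j v (Set.mem_union_left _ hv), hinit.1, fun j => ?_⟩
  -- Both branches of the merged input of `M₁` read the same variable of `t j`.
  convert (hreact j).1 using 2 with v
  funext hv
  split_ifs <;> rfl

end PC

theorem pc_implements_left_general {Var : Type} {Dom : Var → Type} (M₁ M₂ : RModule Var Dom) :
    Implements (PC M₁ M₂) M₁ :=
  Implements.of_trace_restrict Set.subset_union_left (PC.ioVars_left_subset M₁ M₂)
    fun _ => PC.trace_restrict_left M₁ M₂

/-- Projection rule: the parallel composition of compatible modules implements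
each component. -/
theorem pc_implements_left {Var : Type} {Dom : Var → Type} (M₁ M₂ : RModule Var Dom)
    (hcomp : Compatible M₁ M₂) :
    Implements (PC M₁ M₂) M₁ :=
  pc_implements_left_general M₁ M₂
end

section
/- Transitivity of trace containment under projection: if every trace of M₁ projected onto I₂ ∪ O₂ is a trace of M₂, and every trace of M₂ projected onto I₃ ∪ O₃ is a trace of M₃, and O₃ ⊆ O₂ ⊆ O₁, I₃ ⊆ I₂ ∪ O₂, I₂ ⊆ I₁ ∪ O₁, then every trace of M₁ projected onto I₃ ∪ O₃ is a trace of M₃. -/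
open Classical

variable {Var : Type} {Dom : Var → Type}

def RModule.TraceContainment (M N : RModule Var Dom) : Prop :=
  ∀ t, M.Trace t → ∃ t', N.Trace t' ∧
    ∀ j v (hv : v ∈ N.I ∪ N.O) (hv' : v ∈ M.I ∪ M.O), t' j v hv = t j v hv'

theorem RModule.TraceContainment.trans {M₁ M₂ M₃ : RModule Var Dom}
    (h12 : M₁.TraceContainment M₂) (h23 : M₂.TraceContainment M₃)
    (hsub : M₃.I ∪ M₃.O ⊆ M₂.I ∪ M₂.O) : M₁.TraceContainment M₃ := by
  intro t ht
  obtain ⟨t₂, ht₂, ht₂t⟩ := h12 t ht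
  obtain ⟨t₃, ht₃, ht₃t₂⟩ := h23 t₂ ht₂
  exact ⟨t₃, ht₃, fun j v hv hv' => (ht₃t₂ j v hv (hsub hv)).trans (ht₂t j v (hsub hv) hv')⟩

theorem trace_containment_trans_general {Var : Type} {Dom : Var → Type}
    (M₁ M₂ M₃ : RModule Var Dom)
    (hO32 : M₃.O ⊆ M₂.O)
    (hI32 : M₃.I ⊆ M₂.I ∪ M₂.O)
    (h12 : ∀ t, M₁.Trace t → ∃ t', M₂.Trace t' ∧
      ∀ j v (hv : v ∈ M₂.I ∪ M₂.O) (hv' : v ∈ M₁.I ∪ M₁.O), t' j v hv = t j v hv')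
    (h23 : ∀ t, M₂.Trace t → ∃ t', M₃.Trace t' ∧
      ∀ j v (hv : v ∈ M₃.I ∪ M₃.O) (hv' : v ∈ M₂.I ∪ M₂.O), t' j v hv = t j v hv') :
    ∀ t, M₁.Trace t → ∃ t', M₃.Trace t' ∧
      ∀ j v (hv : v ∈ M₃.I ∪ M₃.O) (hv' : v ∈ M₁.I ∪ M₁.O), t' j v hv = t j v hv' :=
  RModule.TraceContainment.trans h12 h23
    (Set.union_subset hI32 (hO32.trans Set.subset_union_right))

/-- Transitivity of trace containment under projection. -/
theorem trace_containment_trans {Var : Type} {Dom : Var → Type}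
    (M₁ M₂ M₃ : RModule Var Dom)
    (hO32 : M₃.O ⊆ M₂.O) (hO21 : M₂.O ⊆ M₁.O)
    (hI32 : M₃.I ⊆ M₂.I ∪ M₂.O) (hI21 : M₂.I ⊆ M₁.I ∪ M₁.O)
    (h12 : ∀ t, M₁.Trace t → ∃ t', M₂.Trace t' ∧
      ∀ j v (hv : v ∈ M₂.I ∪ M₂.O) (hv' : v ∈ M₁.I ∪ M₁.O), t' j v hv = t j v hv')
    (h23 : ∀ t, M₂.Trace t → ∃ t', M₃.Trace t' ∧
      ∀ j v (hv : v ∈ M₃.I ∪ M₃.O) (hv' : v ∈ M₂.I ∪ M₂.O), t' j v hv = t j v hv') :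
    ∀ t, M₁.Trace t → ∃ t', M₃.Trace t' ∧
      ∀ j v (hv : v ∈ M₃.I ∪ M₃.O) (hv' : v ∈ M₁.I ∪ M₁.O), t' j v hv = t j v hv' :=
  trace_containment_trans_general M₁ M₂ M₃ hO32 hI32 h12 h23
end
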